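/- arXiv:1306.2469 — 6 statements merged into one kernel-verified Lean document; each statement's English description precedes it below -/
import Mathlib

section
/- Let X be a real vector space with dim X > 1 equipped with a 2-norm ‖·,·‖, let E be a subset of X, and let f : X → X be ward continuous on E. Then f is sequentially continuous on E, i.e., for every sequence (xₙ) of points in E converging to a point x₀ ∈ E, the sequence (f(xₙ)) converges to f(x₀). -/
open Filter Topology

/-- `ν` is a 2-norm on the real vector space `X`. -/
structure Is2Norm {X : Type*} [AddCommGroup X] [Module ℝ X] (ν : X → X → ℝ) : Prop where
  eq_zero_iff : ∀ x y : X, ν x y = 0 ↔ ¬ LinearIndependent ℝ ![x, y]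
  symm : ∀ x y : X, ν x y = ν y x
  smul_left : ∀ (α : ℝ) (x y : X), ν (α • x) y = |α| * ν x y
  add_right : ∀ x y z : X, ν x (y + z) ≤ ν x y + ν x z

/-- A sequence is quasi-Cauchy w.r.t. the 2-norm `ν`. -/
def QuasiCauchy {X : Type*} [AddCommGroup X] (ν : X → X → ℝ) (x : ℕ → X) : Prop :=
  ∀ z : X, Tendsto (fun n => ν (x (n + 1) - x n) z) atTop (𝓝 0)

/-- A sequence converges to `x₀` w.r.t. the 2-norm `ν`. -/
def ConvergesTo {X : Type*} [AddCommGroup X] (ν : X → X → ℝ) (x : ℕ → X) (x₀ : X) : Prop :=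
  ∀ z : X, Tendsto (fun n => ν (x n - x₀) z) atTop (𝓝 0)

/-- A set is ward compact: every sequence in it admits a quasi-Cauchy subsequence. -/
def WardCompact {X : Type*} [AddCommGroup X] (ν : X → X → ℝ) (E : Set X) : Prop :=
  ∀ x : ℕ → X, (∀ n, x n ∈ E) → ∃ φ : ℕ → ℕ, StrictMono φ ∧ QuasiCauchy ν (x ∘ φ)

/-- `f` is ward continuous on `E`: it maps quasi-Cauchy sequences of points of `E`
to quasi-Cauchy sequences. -/
def WardContinuousOn {X : Type*} [AddCommGroup X] (ν : X → X → ℝ) (f : X → X) (E : Set X) :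
    Prop :=
  ∀ x : ℕ → X, (∀ n, x n ∈ E) → QuasiCauchy ν x → QuasiCauchy ν (fun n => f (x n))

/-- `f` is u-continuous on `E`. -/
def UContinuousOn {X : Type*} [AddCommGroup X] (ν : X → X → ℝ) (f : X → X) (E : Set X) : Prop :=
  ∀ ε > (0 : ℝ), ∃ δ > (0 : ℝ), ∀ x ∈ E, ∀ y ∈ E,
    (∀ z : X, ν (x - y) z < δ) → ∀ w : X, ν (f x - f y) w < ε

/-- `f` is uniformly continuous on `E` (2-normed space version with finitely many `δ`'s). -/
def UniformlyContinuousOn2 {X : Type*} [AddCommGroup X] (ν : X → X → ℝ) (f : X → X)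
    (E : Set X) : Prop :=
  ∀ ε > (0 : ℝ), ∀ w : X, ∃ (p : ℕ) (δ : Fin p → ℝ) (z : Fin p → X), 0 < p ∧
    (∀ k, 0 < δ k) ∧
    ∀ x ∈ E, ∀ y ∈ E, (∀ k, ν (x - y) (z k) < δ k) → ν (f x - f y) w < ε

/-- The sequence of functions `F` converges uniformly to `f` on `E` w.r.t. the 2-norm `ν`. -/
def UniformConvTo {X : Type*} [AddCommGroup X] (ν : X → X → ℝ) (F : ℕ → X → X) (f : X → X)
    (E : Set X) : Prop :=
  ∀ ε > (0 : ℝ), ∃ N : ℕ, ∀ n ≥ N, ∀ x ∈ E, ∀ z : X, ν (F n x - f x) z < ε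

theorem stmt0 {X : Type*} [AddCommGroup X] [Module ℝ X]
    (hdim : 1 < Module.rank ℝ X) (ν : X → X → ℝ) (hν : Is2Norm ν)
    (E : Set X) (f : X → X) (hf : WardContinuousOn ν f E) :
    ∀ x : ℕ → X, (∀ n, x n ∈ E) → ∀ x₀ ∈ E, ConvergesTo ν x x₀ →
      ConvergesTo ν (fun n => f (x n)) (f x₀) := by
  intro x hxE x₀ hx₀E hconv
  -- interleaved sequence: y (2k) = x₀, y (2k+1) = x k
  set y : ℕ → X := fun n => if n % 2 = 0 then x₀ else x (n / 2) with hy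
  have hneg : ∀ v z : X, ν (-v) z = ν v z := by
    intro v z
    have := hν.smul_left (-1) v z
    simpa using this
  have hyE : ∀ n, y n ∈ E := by
    intro n
    by_cases h : n % 2 = 0 <;> simp [hy, h, hxE, hx₀E]
  have hyQC : QuasiCauchy ν y := by
    intro z
    have h0 : Tendsto (fun k => ν (x k - x₀) z) atTop (𝓝 0) := hconv z
    -- For n even: y(n+1)-y n = x (n/2) - x₀; for n odd: y(n+1)-y n = x₀ - x(n/2)
    have key : ∀ n, ν (y (n + 1) - y n) z = ν (x (n / 2) - x₀) z := by
      intro n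
      rcases Nat.even_or_odd n with ⟨k, hk⟩ | ⟨k, hk⟩
      · subst hk
        have h1 : (k + k) % 2 = 0 := by omega
        have h2 : (k + k + 1) % 2 = 1 := by omega
        have h3 : (k + k + 1) / 2 = k := by omega
        have h4 : (k + k) / 2 = k := by omega
        simp [hy, h1, h2, h3, h4]
      · subst hk
        have h1 : (2 * k + 1) % 2 = 1 := by omega
        have h2 : (2 * k + 1 + 1) % 2 = 0 := by omega
        have h3 : (2 * k + 1) / 2 = k := by omega
        have h4 : (2 * k + 1) % 2 ≠ 0 := by omega
        simp only [hy, h2, h3, if_neg h4]; rw [if_pos trivial]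
        rw [show x₀ - x k = -(x k - x₀) by abel, hneg]
    simp only [key]
    have hhalf : Tendsto (fun n : ℕ => n / 2) atTop atTop :=
      tendsto_atTop_atTop.mpr fun b => ⟨2 * b, fun n hn => by omega⟩
    exact h0.comp hhalf
  have hfQC := hf y hyE hyQC
  intro z
  have h2n : Tendsto (fun k : ℕ => 2 * k) atTop atTop :=
    tendsto_atTop_atTop.mpr fun b => ⟨b, fun n hn => by omega⟩
  have := (hfQC z).comp h2n
  have keq : ∀ k, ν (f (y (2 * k + 1)) - f (y (2 * k))) z = ν (f (x k) - f x₀) z := by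
    intro k
    have h1 : (2 * k) % 2 = 0 := by omega
    have h2 : (2 * k + 1) % 2 = 1 := by omega
    have h3 : (2 * k + 1) / 2 = k := by omega
    simp [hy, h1, h2, h3]
  simp only [Function.comp_def] at this
  simpa only [keq] using this
end

section
/- Let X be a real vector space with dim X > 1 equipped with a 2-norm ‖·,·‖, let E be a ward compact subset of X, and let f : X → X be ward continuous on E. Then the image f(E) is ward compact. -/
open Filter Topology

theorem stmt1 {X : Type*} [AddCommGroup X] [Module ℝ X]
    (hdim : 1 < Module.rank ℝ X) (ν : X → X → ℝ) (hν : Is2Norm ν)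
    (E : Set X) (hE : WardCompact ν E) (f : X → X) (hf : WardContinuousOn ν f E) :
    WardCompact ν (f '' E) := by
  intro y hy
  choose x hxE hfx using hy
  obtain ⟨φ, hφ, hqc⟩ := hE x hxE
  refine ⟨φ, hφ, ?_⟩
  have := hf (x ∘ φ) (fun n => hxE (φ n)) hqc
  intro z
  have h := this z
  simpa [Function.comp, hfx] using h
end

section
/- Let X be a real vector space with dim X > 1 equipped with a 2-norm ‖·,·‖, let E be a subset of X, and let f : X → X be uniformly continuous on E. Then f is ward continuous on E. -/
open Filter Topology

lemma nu_nonneg {X : Type*} [AddCommGroup X] [Module ℝ X] (ν : X → X → ℝ)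
    (hν : Is2Norm ν) (x y : X) : 0 ≤ ν x y := by
  have h0 : ν x (0 : X) = 0 := by
    have : ν ((0:ℝ) • (0:X)) x = |(0:ℝ)| * ν 0 x := hν.smul_left 0 0 x
    simp at this
    rw [hν.symm]; exact this
  have hneg : ν x (-y) = ν x y := by
    rw [hν.symm, show (-y : X) = (-1:ℝ) • y by simp, hν.smul_left, hν.symm]
    simp
  have := hν.add_right x y (-y)
  simp [h0, hneg] at this
  linarith

theorem stmt5 {X : Type*} [AddCommGroup X] [Module ℝ X]
    (hdim : 1 < Module.rank ℝ X) (ν : X → X → ℝ) (hν : Is2Norm ν)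
    (E : Set X) (f : X → X) (hf : UniformlyContinuousOn2 ν f E) :
    WardContinuousOn ν f E := by
  intro x hx hqc w
  rw [Metric.tendsto_atTop]
  intro ε hε
  obtain ⟨p, δ, z, hp, hδ, hmain⟩ := hf ε hε w
  have hev : ∀ᶠ n in atTop, ∀ k : Fin p, ν (x (n+1) - x n) (z k) < δ k := by
    rw [eventually_all]
    intro k
    have := (hqc (z k)).eventually (eventually_lt_nhds (hδ k))
    simpa using this
  rw [eventually_atTop] at hev
  obtain ⟨N, hN⟩ := hev
  refine ⟨N, fun n hn => ?_⟩
  have := hmain (x (n+1)) (hx _) (x n) (hx _) (hN n hn)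
  rw [Real.dist_eq]
  rw [abs_of_nonneg (by simpa using nu_nonneg ν hν _ w)]
  simpa using this
end

section
/- Consider ℝ² with the 2-norm ‖(a₁,a₂),(b₁,b₂)‖ = |a₁b₂ − a₂b₁|. The sequence (xₙ) given by xₙ = (√n, √n) is quasi-Cauchy, but its subsequence (x_{n²}) = (n, n) is not quasi-Cauchy; in particular, a subsequence of a quasi-Cauchy sequence need not be quasi-Cauchy. -/
open Filter Topology

/-!
Against any `z`, the 2-norm of a diagonal vector `(t, t)` is `|t| * |z.2 - z.1|`, so a diagonal
sequence is quasi-Cauchy exactly when its consecutive differences tend to `0`. These are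
`√(n + 1) - √n = (√(n + 1) + √n)⁻¹ → 0` for the first sequence, and `(n + 1) - n = 1` for the
second.
-/

def detNorm (a b : ℝ × ℝ) : ℝ := |a.1 * b.2 - a.2 * b.1|

lemma detNorm_diag (t : ℝ) (z : ℝ × ℝ) : detNorm (t, t) z = |t| * |z.2 - z.1| := by
  rw [detNorm, ← abs_mul, mul_sub]

lemma quasiCauchy_detNorm_diag_iff (s : ℕ → ℝ) :
    QuasiCauchy detNorm (fun n => (s n, s n)) ↔
      Tendsto (fun n => s (n + 1) - s n) atTop (𝓝 0) := by
  simp only [QuasiCauchy, Prod.mk_sub_mk, detNorm_diag]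
  constructor
  · intro h
    have hz := h (0, 1)
    simp only [sub_zero, abs_one, mul_one] at hz
    exact (tendsto_zero_iff_abs_tendsto_zero _).2 hz
  · intro h z
    simpa using h.abs.mul_const |z.2 - z.1|

lemma Real.sqrt_add_one_sub_sqrt {x : ℝ} (hx : 0 ≤ x) :
    √(x + 1) - √x = (√(x + 1) + √x)⁻¹ := by
  refine eq_inv_of_mul_eq_one_left ?_
  rw [mul_comm, ← sq_sub_sq, Real.sq_sqrt (by positivity), Real.sq_sqrt hx]
  ring

lemma tendsto_sqrt_succ_sub_sqrt :
    Tendsto (fun n : ℕ => √(n + 1 : ℝ) - √n) atTop (𝓝 0) := by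
  simp only [Real.sqrt_add_one_sub_sqrt (Nat.cast_nonneg _)]
  have hsqrt : Tendsto (fun n : ℕ => √(n : ℝ)) atTop atTop :=
    Real.tendsto_sqrt_atTop.comp tendsto_natCast_atTop_atTop
  have hsqrt_succ : Tendsto (fun n : ℕ => √(n + 1 : ℝ)) atTop atTop :=
    Real.tendsto_sqrt_atTop.comp (tendsto_atTop_add_const_right _ 1 tendsto_natCast_atTop_atTop)
  exact (hsqrt_succ.atTop_add_atTop hsqrt).inv_tendsto_atTop

theorem stmt12 :
    QuasiCauchy (fun a b : ℝ × ℝ => |a.1 * b.2 - a.2 * b.1|)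
      (fun n : ℕ => ((Real.sqrt n, Real.sqrt n) : ℝ × ℝ)) ∧
    ¬ QuasiCauchy (fun a b : ℝ × ℝ => |a.1 * b.2 - a.2 * b.1|)
      (fun n : ℕ => ((Real.sqrt (n ^ 2), Real.sqrt (n ^ 2)) : ℝ × ℝ)) := by
  refine ⟨(quasiCauchy_detNorm_diag_iff _).2 ?_, fun h => ?_⟩
  · simpa using tendsto_sqrt_succ_sub_sqrt
  · have hone := (quasiCauchy_detNorm_diag_iff _).1 h
    simp only [Nat.cast_add_one, Real.sqrt_sq (Nat.cast_nonneg _),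
      Real.sqrt_sq (Nat.cast_add_one_pos _).le, add_sub_cancel_left] at hone
    exact one_ne_zero (tendsto_nhds_unique tendsto_const_nhds hone)
end

section
/- Let X be a real vector space with dim X > 1 equipped with a 2-norm ‖·,·‖, and let y₀, z₀ ∈ X be linearly independent (equivalently, ‖y₀, z₀‖ ≠ 0). Then the function N : X → ℝ defined by N(x) = ‖x, y₀‖ + ‖x, z₀‖ is a norm on X: N(x) ≥ 0 with N(x) = 0 if and only if x = 0, N(αx) = |α|·N(x) for all α ∈ ℝ, and N(x + y) ≤ N(x) + N(y) for all x, y ∈ X. -/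
open Filter Topology

theorem stmt14 {X : Type*} [AddCommGroup X] [Module ℝ X]
    (hdim : 1 < Module.rank ℝ X) (ν : X → X → ℝ) (hν : Is2Norm ν)
    (y₀ z₀ : X) (hind : LinearIndependent ℝ ![y₀, z₀]) :
    (∀ x : X, 0 ≤ ν x y₀ + ν x z₀) ∧
    (∀ x : X, ν x y₀ + ν x z₀ = 0 ↔ x = 0) ∧
    (∀ (α : ℝ) (x : X), ν (α • x) y₀ + ν (α • x) z₀ = |α| * (ν x y₀ + ν x z₀)) ∧
    (∀ x y : X, ν (x + y) y₀ + ν (x + y) z₀ ≤ (ν x y₀ + ν x z₀) + (ν y y₀ + ν y z₀)) := by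

  have nonneg : ∀ x y : X, 0 ≤ ν x y := by
    intro x y
    have h0 : ν x 0 = 0 := by
      rw [hν.eq_zero_iff]
      intro h
      exact (h.ne_zero 1) (by simp)
    have hneg : ν x (-y) = ν x y := by
      rw [hν.symm x (-y), show (-y : X) = (-1 : ℝ) • y by simp, hν.smul_left, hν.symm]
      simp
    have := hν.add_right x y (-y)
    rw [add_neg_cancel, h0, hneg] at this
    linarith
  refine ⟨fun x => add_nonneg (nonneg x y₀) (nonneg x z₀), ?_, ?_, ?_⟩
  · intro x
    constructor
    · intro h
      have h1 : ν x y₀ = 0 := le_antisymm (by linarith [nonneg x z₀]) (nonneg x y₀)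
      have h2 : ν x z₀ = 0 := by linarith
      by_contra hx
      have d1 := (hν.eq_zero_iff x y₀).mp h1
      have d2 := (hν.eq_zero_iff x z₀).mp h2
      rw [LinearIndependent.pair_iff' hx] at d1 d2
      push_neg at d1 d2
      obtain ⟨a, ha⟩ := d1
      obtain ⟨b, hb⟩ := d2
      have := LinearIndependent.pair_iff.mp hind b (-a)
        (by rw [← ha, ← hb]; module)
      have hb0 : b = 0 := this.1
      have ha0 : a = 0 := by have := this.2; linarith [neg_eq_zero.mp this]
      rw [ha0, zero_smul] at ha
      exact (hind.ne_zero 0) (by simpa using ha.symm)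
    · rintro rfl
      have h0 : ∀ y : X, ν 0 y = 0 := by
        intro y
        rw [hν.eq_zero_iff]
        intro h
        exact (h.ne_zero 0) (by simp)
      rw [h0, h0, add_zero]
  · intro α x
    rw [hν.smul_left, hν.smul_left]; ring
  · intro x y
    have h1 : ν (x + y) y₀ ≤ ν x y₀ + ν y y₀ := by
      rw [hν.symm (x+y) y₀, hν.symm x y₀, hν.symm y y₀]; exact hν.add_right y₀ x y
    have h2 : ν (x + y) z₀ ≤ ν x z₀ + ν y z₀ := by
      rw [hν.symm (x+y) z₀, hν.symm x z₀, hν.symm y z₀]; exact hν.add_right z₀ x y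
    linarith
end

section
/- Let X be a real vector space with dim X > 1 equipped with a 2-norm ‖·,·‖, let y₀, z₀ ∈ X be linearly independent, and let N : X → ℝ be the norm N(x) = ‖x, y₀‖ + ‖x, z₀‖. If E is a ward compact subset of X, then E is totally bounded with respect to N: for every ε > 0 there exists a finite set F ⊆ X such that for every x ∈ E there is some f ∈ F with N(x − f) < ε. -/
open Filter Topology

theorem stmt18 {X : Type*} [AddCommGroup X] [Module ℝ X]
    (hdim : 1 < Module.rank ℝ X) (ν : X → X → ℝ) (hν : Is2Norm ν)
    (y₀ z₀ : X) (hind : LinearIndependent ℝ ![y₀, z₀])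
    (E : Set X) (hE : WardCompact ν E) :
    ∀ ε > (0 : ℝ), ∃ F : Finset X, ∀ x ∈ E, ∃ f ∈ F,
      ν (x - f) y₀ + ν (x - f) z₀ < ε := by
  classical
  intro ε hε
  by_contra h
  push_neg at h
  choose g hgE hg using h
  let L : ℕ → Finset X := fun n => Nat.rec ∅ (fun _ s => insert (g s) s) n
  let x : ℕ → X := fun n => g (L n)
  have hLsucc : ∀ n, L (n + 1) = insert (x n) (L n) := fun n => rfl
  have hmem : ∀ m n, m < n → x m ∈ L n := by
    intro m n h
    induction n with
    | zero => omega
    | succ k ih =>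
      rw [hLsucc]
      rcases Nat.lt_succ_iff_lt_or_eq.mp h with h' | h'
      · exact Finset.mem_insert_of_mem (ih h')
      · subst h'; exact Finset.mem_insert_self _ _
  have hxE : ∀ n, x n ∈ E := fun n => hgE (L n)
  obtain ⟨φ, hφ, hqc⟩ := hE x hxE
  have hsum : Tendsto (fun n => ν ((x ∘ φ) (n + 1) - (x ∘ φ) n) y₀ +
      ν ((x ∘ φ) (n + 1) - (x ∘ φ) n) z₀) atTop (𝓝 0) := by
    simpa using (hqc y₀).add (hqc z₀)
  obtain ⟨n, hn⟩ := (hsum.eventually (gt_mem_nhds hε)).exists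
  have hlt : φ n < φ (n + 1) := hφ (Nat.lt_succ_self n)
  have hge := hg (L (φ (n + 1))) (x (φ n)) (hmem _ _ hlt)
  simp only [Function.comp] at hn
  linarith
end
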